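/- Let α be an arbitrary type and let F be a finite type (finitely many truth values). Let 𝒜 be a family of subsets of (α → F) such that every A ∈ 𝒜 is nonempty, the members of 𝒜 are pairwise disjoint, and every A ∈ 𝒜 is determined by finitely many coordinates (there is a finite S ⊆ α with: for all v, w : α → F, if v p = w p for every p ∈ S then v ∈ A ↔ w ∈ A). Then 𝒜 is countable. -/

import Mathlib

/-!
Equip `α → F` with the product of the uniform probability measures on `F`. A set determined by
the coordinates in a finite `S` is a measurable cylinder, and if it contains `v` it contains the
cylinder of all `w` agreeing with `v` on `S`, which has measure `|F| ^ (-|S|) > 0`. In a finite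
measure space a pairwise disjoint family of sets of positive measure is countable.
-/

open MeasureTheory ProbabilityTheory

theorem MeasureTheory.countable_of_pairwise_disjoint_of_measure_pos {Ω : Type*}
    [MeasurableSpace Ω] (μ : Measure Ω) [SFinite μ] {𝒜 : Set (Set Ω)}
    (hmeas : ∀ A ∈ 𝒜, MeasurableSet A) (hpos : ∀ A ∈ 𝒜, 0 < μ A)
    (hdisj : 𝒜.Pairwise Disjoint) :
    𝒜.Countable := by
  have hcount := Measure.countable_meas_pos_of_disjoint_iUnion (μ := μ)
    (As := ((↑) : 𝒜 → Set Ω)) (fun A ↦ hmeas A.1 A.2)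
    (fun A B hAB ↦ hdisj A.2 B.2 (Subtype.coe_ne_coe.2 hAB))
  rw [← Set.countable_coe_iff, ← Set.countable_univ_iff]
  convert hcount
  exact (Set.eq_univ_of_forall fun A : 𝒜 ↦ hpos A.1 A.2).symm

section DependsOn

variable {ι : Type*} {X : ι → Type*} {A : Set ((i : ι) → X i)} {S : Finset ι}

theorem DependsOn.cylinder_restrict_image_eq (hA : DependsOn (· ∈ A) (S : Set ι)) :
    cylinder S (S.restrict '' A) = A := by
  refine subset_antisymm ?_ (Set.subset_preimage_image _ _)
  rintro v ⟨w, hw, hwv⟩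
  exact Eq.mp (hA fun i hi ↦ congrFun hwv ⟨i, hi⟩) hw

theorem DependsOn.pi_singleton_subset (hA : DependsOn (· ∈ A) (S : Set ι)) {v : (i : ι) → X i}
    (hv : v ∈ A) : (S : Set ι).pi (fun i ↦ {v i}) ⊆ A :=
  fun _ hw ↦ Eq.mp (hA fun i hi ↦ (hw i hi).symm) hv

variable [∀ i, MeasurableSpace (X i)] [∀ i, MeasurableSingletonClass (X i)]

theorem DependsOn.measurableSet [∀ i, Countable (X i)] (hA : DependsOn (· ∈ A) (S : Set ι)) :
    MeasurableSet A :=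
  hA.cylinder_restrict_image_eq ▸ .cylinder S (Set.to_countable _).measurableSet

theorem DependsOn.infinitePi_pos (μ : (i : ι) → Measure (X i)) [∀ i, IsProbabilityMeasure (μ i)]
    (hμ : ∀ i x, μ i {x} ≠ 0) (hA : DependsOn (· ∈ A) (S : Set ι)) (hne : A.Nonempty) :
    0 < Measure.infinitePi μ A := by
  obtain ⟨v, hv⟩ := hne
  calc 0 < ∏ i ∈ S, μ i {v i} := pos_iff_ne_zero.2 (Finset.prod_ne_zero_iff.2 fun i _ ↦ hμ i (v i))
    _ = Measure.infinitePi μ ((S : Set ι).pi fun i ↦ {v i}) :=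
      (Measure.infinitePi_pi μ fun i _ ↦ .singleton _).symm
    _ ≤ Measure.infinitePi μ A := measure_mono (hA.pi_singleton_subset hv)

end DependsOn

/-- Generalization to finitely many truth values: any family of nonempty, pairwise
disjoint subsets of `α → F` (`F` a finite type), each determined by finitely many
coordinates, is countable. -/
theorem countable_of_pairwise_disjoint_finitely_determined_finite_values
    {α F : Type*} [Finite F] (𝒜 : Set (Set (α → F)))
    (hne : ∀ A ∈ 𝒜, A.Nonempty)
    (hdisj : 𝒜.Pairwise fun A B => Disjoint A B)
    (hfin : ∀ A ∈ 𝒜, ∃ S : Finset α,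
      ∀ v w : α → F, (∀ p ∈ S, v p = w p) → (v ∈ A ↔ w ∈ A)) :
    𝒜.Countable := by
  rcases isEmpty_or_nonempty F with _ | _
  · exact 𝒜.to_countable -- `α → F` is a subsingleton
  let : MeasurableSpace F := ⊤
  have : MeasurableSingletonClass F := ⟨fun _ ↦ trivial⟩
  have hdep : ∀ A ∈ 𝒜, ∃ S : Finset α, DependsOn (· ∈ A) (S : Set α) := fun A hA ↦
    (hfin A hA).imp fun S hS v w hvw ↦ propext (hS v w hvw)
  refine countable_of_pairwise_disjoint_of_measure_pos
    (Measure.infinitePi fun _ : α ↦ uniformOn (Set.univ : Set F)) (fun A hA ↦ ?_)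
    (fun A hA ↦ ?_) hdisj
  · obtain ⟨S, hS⟩ := hdep A hA
    exact hS.measurableSet
  · obtain ⟨S, hS⟩ := hdep A hA
    refine hS.infinitePi_pos _ (fun _ _ ↦ ?_) (hne A hA)
    simp [uniformOn_eq_zero_iff Set.finite_univ]
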